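/- arXiv:2604.12961 — 2 statements merged into one kernel-verified Lean document; each statement's English description precedes it below -/
import Mathlib

section
/- (Condition C1 of Proposition 1, variance part.) Let X be a nonnegative square-integrable real random variable representing the per-hop queuing delay, x > 0 a threshold and R ≥ 1 an integer number of thresholds. If for every integer r with 1 ≤ r ≤ R the threshold lies in the improvement region, i.e. x ≥ 2·E[X] / (1 + (2r − 1)·P(X > r·x)), then congestion marking with thresholds x, 2x, …, Rx does not increase the variance: Var( X − x·Σ_{i=1}^{R} 1{X > i·x} ) ≤ Var(X). -/
open MeasureTheory ProbabilityTheory Finset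
open scoped ProbabilityTheory

/-!
Let `M` count the thresholds exceeded, so that `Var (X - x M) = Var X - 2x cov(X, M) + x² Var M`.
On `{X > r x}` we have `X ≥ r x`, so each indicator contributes at least `(r x - E X) p_r` to
`cov(X, M)`, where `p_r = P(X > r x)`. The events are nested, so
`cov(1_i, 1_j) = p_max (1 - p_min) ≤ p_max (1 - p_max)`, and summing over the `2r - 1` pairs with
`max i j = r` gives `Var M ≤ Σ (2r - 1) p_r (1 - p_r)`. Hence the variance changes by at most
`Σ_r x p_r (2 E X - x (1 + (2r - 1) p_r))`, and the threshold condition makes every term `≤ 0`.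
-/

lemma sum_Icc_sum_Icc_max (R : ℕ) (g : ℕ → ℝ) :
    ∑ i ∈ Icc 1 R, ∑ j ∈ Icc 1 R, g (max i j) = ∑ r ∈ Icc 1 R, (2 * (r : ℝ) - 1) * g r := by
  induction R with
  | zero => simp
  | succ n ih =>
    have hinner : ∀ i ∈ Icc 1 n,
        ∑ j ∈ Icc 1 (n + 1), g (max i j) = ∑ j ∈ Icc 1 n, g (max i j) + g (n + 1) := by
      intro i hi
      rw [sum_Icc_succ_top (by omega), max_eq_right (by simp at hi; omega)]
    have hlast : ∑ j ∈ Icc 1 (n + 1), g (max (n + 1) j) = (n + 1) * g (n + 1) := by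
      rw [sum_congr rfl fun j hj => by rw [max_eq_left (by simp at hj; omega)]]
      simp
    rw [sum_Icc_succ_top (by omega), sum_congr rfl hinner, sum_add_distrib, ih, hlast,
      sum_const, Nat.card_Icc, sum_Icc_succ_top (by omega)]
    push_cast
    ring

section

variable {Ω : Type*} [MeasurableSpace Ω] {μ : Measure Ω} [IsProbabilityMeasure μ]

lemma memLp_indicator_one {s : Set Ω} (hs : MeasurableSet s) (p : ENNReal) :
    MemLp (s.indicator (1 : Ω → ℝ)) p μ :=
  memLp_indicator_const p hs 1 (.inr (measure_ne_top μ s))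

lemma covariance_indicator_one_le_of_subset {s t : Set Ω} (hs : MeasurableSet s)
    (ht : MeasurableSet t) (hts : t ⊆ s) :
    cov[s.indicator 1, t.indicator 1; μ] ≤ μ.real t * (1 - μ.real t) := by
  rw [covariance_eq_sub (memLp_indicator_one hs 2) (memLp_indicator_one ht 2),
    ← Set.inter_indicator_one, Set.inter_eq_right.mpr hts, integral_indicator_one hs,
    integral_indicator_one ht]
  have hle : μ.real t ≤ μ.real s := measureReal_mono hts
  nlinarith [measureReal_nonneg (μ := μ) (s := t)]

lemma sub_mul_measureReal_le_covariance_indicator_one {X : Ω → ℝ} (hX : MemLp X 2 μ)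
    {s : Set Ω} (hs : MeasurableSet s) {c : ℝ} (hc : ∀ ω ∈ s, c ≤ X ω) :
    (c - μ[X]) * μ.real s ≤ cov[X, s.indicator (1 : Ω → ℝ); μ] := by
  have hXs : μ[X * s.indicator (1 : Ω → ℝ)] = ∫ ω in s, X ω ∂μ := by
    rw [← integral_indicator hs]
    congr 1
    ext ω
    by_cases h : ω ∈ s <;> simp [h]
  rw [covariance_eq_sub hX (memLp_indicator_one hs 2), hXs, integral_indicator_one hs, sub_mul]
  gcongr
  exact setIntegral_ge_of_const_le_real hs (measure_ne_top μ s) hc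
    (hX.integrable one_le_two).integrableOn

lemma variance_sum_indicator_one_le {A : ℕ → Set Ω} (hA : ∀ r, MeasurableSet (A r))
    (hanti : Antitone A) (R : ℕ) :
    Var[∑ i ∈ Icc 1 R, (A i).indicator 1; μ]
      ≤ ∑ r ∈ Icc 1 R, (2 * (r : ℝ) - 1) * (μ.real (A r) * (1 - μ.real (A r))) := by
  rw [variance_sum' fun i _ => memLp_indicator_one (hA i) 2, ← sum_Icc_sum_Icc_max]
  refine sum_le_sum fun i _ => sum_le_sum fun j _ => ?_
  rcases le_total i j with hij | hji
  · rw [max_eq_right hij]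
    exact covariance_indicator_one_le_of_subset (hA i) (hA j) (hanti hij)
  · rw [max_eq_left hji, covariance_comm]
    exact covariance_indicator_one_le_of_subset (hA j) (hA i) (hanti hji)

lemma variance_sub_mul_sum_indicator_one_le {X : Ω → ℝ} (hX : MemLp X 2 μ) {A : ℕ → Set Ω}
    (hA : ∀ r, MeasurableSet (A r)) (hanti : Antitone A) {c : ℕ → ℝ}
    (hc : ∀ r, ∀ ω ∈ A r, c r ≤ X ω) {x : ℝ} (hx : 0 ≤ x) (R : ℕ) :
    Var[fun ω => X ω - x * ∑ i ∈ Icc 1 R, (A i).indicator 1 ω; μ]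
      ≤ Var[X; μ] + ∑ r ∈ Icc 1 R, x * μ.real (A r)
          * (2 * (μ[X] - c r) + x * (2 * (r : ℝ) - 1) * (1 - μ.real (A r))) := by
  have hA2 : ∀ i ∈ Icc 1 R, MemLp ((A i).indicator (1 : Ω → ℝ)) 2 μ :=
    fun i _ => memLp_indicator_one (hA i) 2
  have hM : MemLp (∑ i ∈ Icc 1 R, (A i).indicator (1 : Ω → ℝ)) 2 μ := memLp_finsetSum' _ hA2
  have hcov : ∑ r ∈ Icc 1 R, (c r - μ[X]) * μ.real (A r)
      ≤ cov[X, ∑ i ∈ Icc 1 R, (A i).indicator 1; μ] := by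
    rw [covariance_sum_right' hA2 hX]
    exact sum_le_sum fun r _ => sub_mul_measureReal_le_covariance_indicator_one hX (hA r) (hc r)
  have hvar := variance_sum_indicator_one_le (μ := μ) hA hanti R
  have hsplit : ∑ r ∈ Icc 1 R, x * μ.real (A r)
        * (2 * (μ[X] - c r) + x * (2 * (r : ℝ) - 1) * (1 - μ.real (A r)))
      = -(2 * x) * ∑ r ∈ Icc 1 R, (c r - μ[X]) * μ.real (A r)
        + x ^ 2 * ∑ r ∈ Icc 1 R, (2 * (r : ℝ) - 1) * (μ.real (A r) * (1 - μ.real (A r))) := by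
    rw [mul_sum, mul_sum, ← sum_add_distrib]
    exact sum_congr rfl fun r _ => by ring
  simp_rw [← Finset.sum_apply (s := Icc 1 R) (g := fun i => (A i).indicator (1 : Ω → ℝ))]
  rw [variance_fun_sub hX (hM.const_mul x), covariance_const_mul_right, variance_const_mul,
    hsplit]
  nlinarith [mul_le_mul_of_nonneg_left hcov (by positivity : 0 ≤ 2 * x),
    mul_le_mul_of_nonneg_left hvar (sq_nonneg x)]

end

theorem marking_variance_nonincreasing_C1_general
    {Ω : Type*} [MeasureSpace Ω] [IsProbabilityMeasure (ℙ : Measure Ω)]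
    (X : Ω → ℝ) (hm : Measurable X) (hL : MemLp X 2 ℙ)
    (x : ℝ) (hx : 0 < x) (R : ℕ)
    (hthr : ∀ r : ℕ, 1 ≤ r → r ≤ R →
      x ≥ 2 * 𝔼[X]
        / (1 + (2 * (r : ℝ) - 1) * (ℙ {ω | (r : ℝ) * x < X ω}).toReal)) :
    Var[fun ω => X ω
        - x * ∑ i ∈ Finset.Icc 1 R, (if (i : ℝ) * x < X ω then (1 : ℝ) else 0)]
      ≤ Var[X] := by
  set A : ℕ → Set Ω := fun r => {ω | (r : ℝ) * x < X ω}
  have hA : ∀ r, MeasurableSet (A r) := fun r => measurableSet_lt measurable_const hm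
  have hanti : Antitone A := fun i j hij ω (hω : (j : ℝ) * x < X ω) =>
    show (i : ℝ) * x < X ω from lt_of_le_of_lt (by gcongr) hω
  have hmark : (fun ω => X ω - x * ∑ i ∈ Icc 1 R, (if (i : ℝ) * x < X ω then (1 : ℝ) else 0))
      = fun ω => X ω - x * ∑ i ∈ Icc 1 R, (A i).indicator 1 ω := by
    ext ω
    simp [A, Set.indicator_apply]
  rw [hmark]
  refine (variance_sub_mul_sum_indicator_one_le hL hA hanti (c := fun r => r * x)
    (fun r ω hω => le_of_lt hω) hx.le R).trans (add_le_of_nonpos_right (sum_nonpos ?_))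
  intro r hr
  obtain ⟨hr1, hrR⟩ := mem_Icc.mp hr
  have hp : 0 ≤ (ℙ : Measure Ω).real (A r) := measureReal_nonneg
  have hden : 0 < 1 + (2 * (r : ℝ) - 1) * (ℙ : Measure Ω).real (A r) := by
    have : (1 : ℝ) ≤ r := by exact_mod_cast hr1
    nlinarith
  have hthr' := (div_le_iff₀ hden).mp (hthr r hr1 hrR)
  have hxp : 0 ≤ x * (ℙ : Measure Ω).real (A r) := by positivity
  linarith [mul_le_mul_of_nonneg_left hthr' hxp]

/-- **Condition C1 of Proposition 1 (variance part).**
If for every `1 ≤ r ≤ R` the threshold lies in the improvement region,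
`x ≥ 2·E[X]/(1 + (2r − 1)·P(X > r·x))`, then congestion marking with
thresholds `x, 2x, …, Rx` does not increase the variance. -/
theorem marking_variance_nonincreasing_C1
    {Ω : Type*} [MeasureSpace Ω] [IsProbabilityMeasure (ℙ : Measure Ω)]
    (X : Ω → ℝ) (hm : Measurable X) (hL : MemLp X 2 ℙ)
    (hpos : ∀ᵐ ω ∂(ℙ : Measure Ω), 0 ≤ X ω)
    (x : ℝ) (hx : 0 < x) (R : ℕ) (hR : 1 ≤ R)
    (hthr : ∀ r : ℕ, 1 ≤ r → r ≤ R →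
      x ≥ 2 * 𝔼[X]
        / (1 + (2 * (r : ℝ) - 1) * (ℙ {ω | (r : ℝ) * x < X ω}).toReal)) :
    Var[fun ω => X ω
        - x * ∑ i ∈ Finset.Icc 1 R, (if (i : ℝ) * x < X ω then (1 : ℝ) else 0)]
      ≤ Var[X] :=
  marking_variance_nonincreasing_C1_general X hm hL x hx R hthr
end

section
/- (Improvement region of the exponential distribution is its entire range.) Let X be exponentially distributed with rate λ > 0. Then for every threshold spacing x > 0 and every integer R ≥ 1, the congestion-marking correction strictly decreases the variance: Var( X − x·Σ_{i=1}^{R} 1{X > i·x} ) < Var(X). Indeed, every individual marking step is strictly improving: Var(X_r) < Var(X_{r−1}) for all 1 ≤ r ≤ R, where X_r := X − x·Σ_{i=1}^{r} 1{X > i·x}. -/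
/-!
Write `X_{k+1} = X_k - x·1{X > c}` with `c = (k+1)x` and `p = P(X > c) = e^{-λc}`. Then
`Var X_{k+1} = Var X_k - 2x·Cov(X_k, 1{X > c}) + x²p(1-p)`.
On `{X > c}` all `k` earlier marks have fired, so `X_k = X - kx` there, and memorylessness gives
`E[X; X > c] = (c + 1/λ)p`; hence `E[X_k; X > c] = (x + 1/λ)p`. Since `X_k ≤ X`, also
`E X_k ≤ 1/λ`, so the covariance is at least `xp` and the variance drops by at least
`x²p(1+p) > 0`.
-/

open MeasureTheory ProbabilityTheory Finset
open scoped ProbabilityTheory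

/-- The marked-corrected variable `X_r := X − x·Σ_{i=1}^{r} 1{X > i·x}`. -/
noncomputable def markedCorrected {Ω : Type*} (X : Ω → ℝ) (x : ℝ) (r : ℕ) : Ω → ℝ :=
  fun ω => X ω - x * ∑ i ∈ Finset.Icc 1 r, (if (i : ℝ) * x < X ω then (1 : ℝ) else 0)

section Indicator

variable {Ω : Type*} {mΩ : MeasurableSpace Ω} {μ : Measure Ω} {Y : Ω → ℝ} {A : Set Ω}

lemma memLp_indicator_one_s18 [IsFiniteMeasure μ] (hA : MeasurableSet A) (p : ENNReal) :
    MemLp (A.indicator (1 : Ω → ℝ)) p μ :=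
  memLp_indicator_const p hA 1 (Or.inr (measure_ne_top μ A))

variable [IsProbabilityMeasure μ]

lemma variance_indicator_one (hA : MeasurableSet A) :
    Var[A.indicator 1; μ] = μ.real A * (1 - μ.real A) := by
  have hsq : A.indicator (1 : Ω → ℝ) ^ 2 = A.indicator 1 := by
    ext ω
    by_cases h : ω ∈ A <;> simp [h]
  rw [variance_eq_sub (memLp_indicator_one_s18 hA 2), hsq, integral_indicator_one hA]
  ring

lemma covariance_indicator_one_right (hY : MemLp Y 2 μ) (hA : MeasurableSet A) :
    cov[Y, A.indicator 1; μ] = ∫ ω in A, Y ω ∂μ - μ[Y] * μ.real A := by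
  rw [covariance_eq_sub hY (memLp_indicator_one_s18 hA 2), integral_indicator_one hA,
    ← integral_indicator hA]
  congr 2
  ext ω
  by_cases h : ω ∈ A <;> simp [h]

lemma variance_sub_mul_indicator_one (hY : MemLp Y 2 μ) (hA : MeasurableSet A) (x : ℝ) :
    Var[fun ω ↦ Y ω - x * A.indicator 1 ω; μ]
      = Var[Y; μ] - 2 * x * (∫ ω in A, Y ω ∂μ - μ[Y] * μ.real A)
        + x ^ 2 * (μ.real A * (1 - μ.real A)) := by
  rw [variance_fun_sub hY ((memLp_indicator_one_s18 hA 2).const_mul x), covariance_const_mul_right,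
    variance_const_mul, covariance_indicator_one_right hY hA, variance_indicator_one hA]
  ring

end Indicator

section MarkedCorrected

variable {Ω : Type*} (X : Ω → ℝ) (x : ℝ)

@[simp]
lemma markedCorrected_zero : markedCorrected X x 0 = X := by
  ext ω
  simp [markedCorrected]

lemma markedCorrected_succ (k : ℕ) (ω : Ω) :
    markedCorrected X x (k + 1) ω
      = markedCorrected X x k ω - x * (Set.Ioi ((k + 1 : ℝ) * x)).indicator 1 (X ω) := by
  simp only [markedCorrected, sum_Icc_succ_top (Nat.le_add_left 1 k), Set.indicator_apply,
    Set.mem_Ioi, Pi.one_apply]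
  push_cast
  ring

lemma markedCorrected_eq_comp (k : ℕ) :
    markedCorrected X x k = fun ω ↦ markedCorrected id x k (X ω) :=
  rfl

variable {X x}

lemma markedCorrected_le (hx : 0 ≤ x) (k : ℕ) (ω : Ω) : markedCorrected X x k ω ≤ X ω :=
  sub_le_self _ <| mul_nonneg hx <| sum_nonneg fun _ _ ↦ by split_ifs <;> norm_num

lemma markedCorrected_eq_of_lt (hx : 0 ≤ x) {k : ℕ} {ω : Ω} (h : k * x < X ω) :
    markedCorrected X x k ω = X ω - k * x := by
  have hall : ∀ i ∈ Icc 1 k, (if (i : ℝ) * x < X ω then (1 : ℝ) else 0) = 1 := fun i hi ↦ by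
    have : (i : ℝ) ≤ k := by exact_mod_cast (mem_Icc.mp hi).2
    rw [if_pos (by nlinarith)]
  simp only [markedCorrected, sum_congr rfl hall, sum_const, Nat.card_Icc, Nat.add_sub_cancel,
    nsmul_eq_mul, mul_one]
  ring

variable {mΩ : MeasurableSpace Ω}

@[fun_prop]
lemma Measurable.markedCorrected (hX : Measurable X) (k : ℕ) :
    Measurable (markedCorrected X x k) := by
  unfold _root_.markedCorrected
  refine hX.sub (measurable_const.mul (Finset.measurable_sum _ fun i _ ↦ ?_))
  exact Measurable.ite (measurableSet_lt measurable_const hX) measurable_const measurable_const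

lemma memLp_markedCorrected {μ : Measure Ω} [IsFiniteMeasure μ] (hX : MemLp X 2 μ)
    (hXm : Measurable X) (k : ℕ) :
    MemLp (markedCorrected X x k) 2 μ := by
  induction k with
  | zero => simpa using hX
  | succ k ih =>
    have hind : MemLp (fun ω ↦ (Set.Ioi ((k + 1 : ℝ) * x)).indicator (1 : ℝ → ℝ) (X ω)) 2 μ :=
      memLp_indicator_one_s18 (hXm measurableSet_Ioi) 2
    convert ih.sub (hind.const_mul x) using 1
    ext ω
    exact markedCorrected_succ X x k ω

end MarkedCorrected

section Exponential

open Real Filter Topology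

variable {lam : ℝ}

lemma expMeasure_eq_withDensity :
    expMeasure lam = (volume.restrict (Set.Ioi 0)).withDensity
      fun t ↦ ENNReal.ofReal (lam * exp (-(lam * t))) := by
  have hpdf : exponentialPDF lam
      = (Set.Ici 0).indicator fun t ↦ ENNReal.ofReal (lam * exp (-(lam * t))) := by
    ext t
    by_cases ht : 0 ≤ t <;> simp [exponentialPDF_eq, ht]
  rw [Measure.restrict_congr_set Ioi_ae_eq_Ici, ← withDensity_indicator measurableSet_Ici, ← hpdf]
  rfl

lemma expMeasure_restrict_Ioi {c : ℝ} (hc : 0 ≤ c) :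
    (expMeasure lam).restrict (Set.Ioi c) = (volume.restrict (Set.Ioi c)).withDensity
      fun t ↦ ENNReal.ofReal (lam * exp (-(lam * t))) := by
  rw [expMeasure_eq_withDensity, restrict_withDensity measurableSet_Ioi,
    Measure.restrict_restrict measurableSet_Ioi, Set.Ioi_inter_Ioi, max_eq_left hc]

lemma setIntegral_Ioi_expMeasure (hlam : 0 ≤ lam) {c : ℝ} (hc : 0 ≤ c) (g : ℝ → ℝ) :
    ∫ t in Set.Ioi c, g t ∂expMeasure lam = ∫ t in Set.Ioi c, lam * exp (-(lam * t)) * g t := by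
  rw [expMeasure_restrict_Ioi hc, integral_withDensity_eq_integral_toReal_smul (by fun_prop)
    (.of_forall fun _ ↦ ENNReal.ofReal_lt_top)]
  simp_rw [ENNReal.toReal_ofReal (by positivity : 0 ≤ lam * exp _), smul_eq_mul]

lemma integrableOn_Ioi_expMeasure_iff (hlam : 0 ≤ lam) {c : ℝ} (hc : 0 ≤ c) {g : ℝ → ℝ} :
    IntegrableOn g (Set.Ioi c) (expMeasure lam)
      ↔ IntegrableOn (fun t ↦ lam * exp (-(lam * t)) * g t) (Set.Ioi c) := by
  rw [IntegrableOn, expMeasure_restrict_Ioi hc, integrable_withDensity_iff (by fun_prop)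
    (.of_forall fun _ ↦ ENNReal.ofReal_lt_top)]
  simp_rw [ENNReal.toReal_ofReal (by positivity : 0 ≤ lam * exp _), mul_comm (g _)]
  rfl

lemma expMeasure_restrict_Ioi_zero : (expMeasure lam).restrict (Set.Ioi 0) = expMeasure lam := by
  rw [expMeasure_restrict_Ioi le_rfl, ← expMeasure_eq_withDensity]

lemma expMeasure_real_Ioi (hlam : 0 < lam) {c : ℝ} (hc : 0 ≤ c) :
    (expMeasure lam).real (Set.Ioi c) = exp (-(lam * c)) := by
  have := isProbabilityMeasure_expMeasure hlam
  rw [← Set.compl_Iic, probReal_compl_eq_one_sub measurableSet_Iic, ← cdf_eq_real,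
    cdf_expMeasure_eq hlam, if_pos hc, sub_sub_cancel]

lemma setIntegral_Ioi_id_expMeasure (hlam : 0 < lam) {c : ℝ} (hc : 0 ≤ c) :
    ∫ t in Set.Ioi c, t ∂expMeasure lam = (c + 1 / lam) * exp (-(lam * c)) := by
  have hderiv : ∀ t ∈ Set.Ici c, HasDerivAt (fun t ↦ -((t + 1 / lam) * exp (-(lam * t))))
      (lam * exp (-(lam * t)) * t) t := by
    intro t _
    have hexp : HasDerivAt (fun t ↦ exp (-(lam * t))) (-lam * exp (-(lam * t))) t := by
      simpa [mul_comm] using ((hasDerivAt_id t).const_mul lam).neg.exp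
    refine (((hasDerivAt_id' t).add_const (1 / lam)).fun_mul hexp).fun_neg.congr_deriv ?_
    field_simp
    ring
  have hlim : Tendsto (fun t ↦ -((t + 1 / lam) * exp (-(lam * t)))) atTop (𝓝 0) := by
    have h1 := tendsto_rpow_mul_exp_neg_mul_atTop_nhds_zero 1 lam hlam
    have h0 := tendsto_rpow_mul_exp_neg_mul_atTop_nhds_zero 0 lam hlam
    convert (h1.add (h0.const_mul (1 / lam))).neg using 2 <;> simp; ring
  rw [setIntegral_Ioi_expMeasure hlam.le hc, integral_Ioi_of_hasDerivAt_of_nonneg' hderiv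
    (fun t ht ↦ by have : 0 < t := hc.trans_lt ht; positivity) hlim]
  ring

lemma integral_id_expMeasure (hlam : 0 < lam) : ∫ t, t ∂expMeasure lam = 1 / lam := by
  rw [← expMeasure_restrict_Ioi_zero, setIntegral_Ioi_id_expMeasure hlam le_rfl]
  simp

lemma memLp_id_expMeasure (hlam : 0 < lam) : MemLp id 2 (expMeasure lam) := by
  rw [memLp_two_iff_integrable_sq measurable_id.aestronglyMeasurable,
    ← expMeasure_restrict_Ioi_zero, ← IntegrableOn, integrableOn_Ioi_expMeasure_iff hlam.le le_rfl]
  refine IntegrableOn.congr_fun (Integrable.const_mul (integrableOn_rpow_mul_exp_neg_mul_rpow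
    (s := 2) (p := 1) (by norm_num) one_pos hlam) lam) (fun t _ ↦ ?_) measurableSet_Ioi
  simp only [id, rpow_two, rpow_one, neg_mul]
  ring

end Exponential

section MarkedExponential

open Real

variable {lam x : ℝ}

lemma variance_markedCorrected_succ_lt_expMeasure (hlam : 0 < lam) (hx : 0 < x) (k : ℕ) :
    Var[markedCorrected id x (k + 1); expMeasure lam]
      < Var[markedCorrected id x k; expMeasure lam] := by
  have := isProbabilityMeasure_expMeasure hlam
  set c : ℝ := (k + 1) * x
  set Y := markedCorrected id x k
  have hc : 0 ≤ c := by positivity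
  have hid : Integrable (fun t : ℝ ↦ t) (expMeasure lam) :=
    (memLp_id_expMeasure hlam).integrable one_le_two
  have hY : MemLp Y 2 (expMeasure lam) :=
    memLp_markedCorrected (memLp_id_expMeasure hlam) measurable_id k
  have htail : ∫ t in Set.Ioi c, Y t ∂expMeasure lam = (x + 1 / lam) * exp (-(lam * c)) :=
    calc ∫ t in Set.Ioi c, Y t ∂expMeasure lam = ∫ t in Set.Ioi c, (t - k * x) ∂expMeasure lam :=
          setIntegral_congr_fun measurableSet_Ioi fun t ht ↦
            markedCorrected_eq_of_lt hx.le (lt_of_le_of_lt (by nlinarith) ht)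
      _ = (x + 1 / lam) * exp (-(lam * c)) := by
          rw [integral_sub hid.integrableOn (integrable_const _), setIntegral_const,
            setIntegral_Ioi_id_expMeasure hlam hc, expMeasure_real_Ioi hlam hc, smul_eq_mul]
          ring
  have hmean : ∫ t, Y t ∂expMeasure lam ≤ 1 / lam :=
    integral_id_expMeasure hlam ▸ integral_mono (hY.integrable one_le_two) hid
      (markedCorrected_le hx.le k)
  have hsucc : markedCorrected id x (k + 1) = fun t ↦ Y t - x * (Set.Ioi c).indicator 1 t :=
    funext (markedCorrected_succ id x k)
  rw [hsucc, variance_sub_mul_indicator_one hY measurableSet_Ioi, htail,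
    expMeasure_real_Ioi hlam hc]
  have hp : 0 < exp (-(lam * c)) := exp_pos _
  nlinarith [mul_le_mul_of_nonneg_left hmean (by positivity : 0 ≤ 2 * x * exp (-(lam * c))),
    (by positivity : 0 < x ^ 2 * exp (-(lam * c)) * (1 + exp (-(lam * c))))]

end MarkedExponential

/-- **The improvement region of the exponential distribution is its entire
range.** If `X` is exponential with rate `λ > 0`, then for every threshold
spacing `x > 0` and every `R ≥ 1` the congestion-marking correction strictly
decreases the variance, and indeed every individual marking step is strictly
improving. -/
theorem exponential_marking_strict_variance_decrease
    {Ω : Type*} [MeasureSpace Ω] [IsProbabilityMeasure (ℙ : Measure Ω)]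
    (X : Ω → ℝ) (hm : Measurable X)
    (lam : ℝ) (hlam : 0 < lam)
    (hlaw : Measure.map X (ℙ : Measure Ω) = expMeasure lam)
    (x : ℝ) (hx : 0 < x) (R : ℕ) (hR : 1 ≤ R) :
    Var[markedCorrected X x R] < Var[X]
    ∧ ∀ r : ℕ, 1 ≤ r → r ≤ R →
        Var[markedCorrected X x r] < Var[markedCorrected X x (r - 1)] := by
  have hX : MeasurePreserving X ℙ (expMeasure lam) := ⟨hm, hlaw⟩
  have hstep (k : ℕ) : Var[markedCorrected X x (k + 1)] < Var[markedCorrected X x k] := by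
    rw [markedCorrected_eq_comp, markedCorrected_eq_comp X x k, hX.variance_fun_comp (by fun_prop),
      hX.variance_fun_comp (by fun_prop)]
    exact variance_markedCorrected_succ_lt_expMeasure hlam hx k
  refine ⟨?_, fun r hr _ ↦ ?_⟩
  · simpa using strictAnti_nat_of_succ_lt (f := fun r ↦ Var[markedCorrected X x r]) hstep
      (by omega : 0 < R)
  · obtain ⟨k, rfl⟩ := Nat.exists_eq_add_of_le' hr
    simpa using hstep k
end
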